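/- arXiv:1602.08877 — 3 statements merged into one kernel-verified Lean document; each statement's English description precedes it below -/
import Mathlib

section
/- The function f(X, Z) = Tr(Xᴴ Z⁻¹ X) is jointly convex in (X, Z) over the set of pairs where X ∈ ℂ^{M×N} and Z ∈ ℂ^{M×M} is Hermitian positive definite. That is, for Z₁, Z₂ ≻ 0, X₁, X₂, and t ∈ [0,1]: Tr((tX₁+(1-t)X₂)ᴴ (tZ₁+(1-t)Z₂)⁻¹ (tX₁+(1-t)X₂)) ≤ t·Tr(X₁ᴴZ₁⁻¹X₁) + (1-t)·Tr(X₂ᴴZ₂⁻¹X₂). -/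
/-!
For `Z ≻ 0`, completing the square gives
`Tr(Xᴴ Z⁻¹ X) - Re Tr(Xᴴ Y + Yᴴ X - Yᴴ Z Y) = Tr((X - Z Y)ᴴ Z⁻¹ (X - Z Y)) ≥ 0`,
with equality at `Y = Z⁻¹ X`. So `Tr(Xᴴ Z⁻¹ X)` is the pointwise maximum over `Y` of functions
that are real-linear in the pair `(X, Z)`, and is therefore jointly convex.
-/

open Matrix
open scoped ComplexOrder

namespace Matrix

theorem convex_setOf_posDef {m 𝕜 : Type*} [RCLike 𝕜] :
    Convex ℝ {A : Matrix m m 𝕜 | A.PosDef} := by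
  intro A hA B hB a b ha hb hab
  rcases ha.lt_or_eq with ha | rfl
  · exact (hA.smul ha).add_posSemidef (hB.posSemidef.smul hb)
  · rw [zero_add] at hab
    subst hab
    simpa using hB

variable {m n 𝕜 : Type*} [Fintype m] [Fintype n] [RCLike 𝕜]

noncomputable def matrixFractional [DecidableEq m] (p : Matrix m n 𝕜 × Matrix m m 𝕜) : ℝ :=
  RCLike.re (p.1ᴴ * p.2⁻¹ * p.1).trace

def matrixFractionalMinorant (Y : Matrix m n 𝕜) (p : Matrix m n 𝕜 × Matrix m m 𝕜) : ℝ :=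
  RCLike.re (p.1ᴴ * Y + Yᴴ * p.1 - Yᴴ * p.2 * Y).trace

theorem matrixFractionalMinorant_add_smul (Y : Matrix m n 𝕜)
    (p q : Matrix m n 𝕜 × Matrix m m 𝕜) (a b : ℝ) :
    matrixFractionalMinorant Y (a • p + b • q) =
      a * matrixFractionalMinorant Y p + b * matrixFractionalMinorant Y q := by
  have hsplit : (a • p.1 + b • q.1)ᴴ * Y + Yᴴ * (a • p.1 + b • q.1) -
      Yᴴ * (a • p.2 + b • q.2) * Y =
      a • (p.1ᴴ * Y + Yᴴ * p.1 - Yᴴ * p.2 * Y) + b • (q.1ᴴ * Y + Yᴴ * q.1 - Yᴴ * q.2 * Y) := by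
    simp only [conjTranspose_add, conjTranspose_smul, star_trivial,
      Matrix.add_mul, Matrix.mul_add, Matrix.smul_mul, Matrix.mul_smul]
    module
  simp only [matrixFractionalMinorant, Prod.fst_add, Prod.snd_add, Prod.smul_fst,
    Prod.smul_snd, hsplit, trace_add, trace_smul, map_add, RCLike.smul_re]

theorem isGreatest_matrixFractionalMinorant [DecidableEq m] {X : Matrix m n 𝕜}
    {Z : Matrix m m 𝕜} (hZ : Z.PosDef) :
    IsGreatest (Set.range fun Y => matrixFractionalMinorant Y (X, Z))
      (matrixFractional (X, Z)) := by
  have hdet : IsUnit Z.det := (isUnit_iff_isUnit_det Z).mp hZ.isUnit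
  refine ⟨⟨Z⁻¹ * X, ?_⟩, ?_⟩
  · simp only [matrixFractionalMinorant, matrixFractional, Matrix.mul_assoc _ Z,
      mul_nonsing_inv_cancel_left _ _ hdet, add_sub_cancel_right, Matrix.mul_assoc]
  · rintro _ ⟨Y, rfl⟩
    have hsquare : (X - Z * Y)ᴴ * Z⁻¹ * (X - Z * Y) =
        Xᴴ * Z⁻¹ * X - (Xᴴ * Y + Yᴴ * X - Yᴴ * Z * Y) := by
      simp only [conjTranspose_sub, conjTranspose_mul, hZ.isHermitian.eq, Matrix.mul_sub,
        Matrix.sub_mul, Matrix.mul_assoc, mul_nonsing_inv_cancel_left _ _ hdet,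
        nonsing_inv_mul_cancel_left _ _ hdet]
      abel
    have hnonneg := (RCLike.nonneg_iff.mp
      (hZ.inv.posSemidef.conjTranspose_mul_mul_same (X - Z * Y)).trace_nonneg).1
    rwa [hsquare, trace_sub, map_sub, sub_nonneg] at hnonneg

theorem convexOn_matrixFractional [DecidableEq m] :
    ConvexOn ℝ {p : Matrix m n 𝕜 × Matrix m m 𝕜 | p.2.PosDef} matrixFractional := by
  refine ⟨fun p hp q hq a b ha hb hab => convex_setOf_posDef hp hq ha hb hab, ?_⟩
  intro p hp q hq a b ha hb hab
  obtain ⟨Y, hY⟩ := (isGreatest_matrixFractionalMinorant (X := (a • p + b • q).1)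
    (convex_setOf_posDef hp hq ha hb hab)).1
  calc matrixFractional (a • p + b • q)
      = matrixFractionalMinorant Y (a • p + b • q) := hY.symm
    _ = a * matrixFractionalMinorant Y p + b * matrixFractionalMinorant Y q :=
      matrixFractionalMinorant_add_smul Y p q a b
    _ ≤ a * matrixFractional p + b * matrixFractional q := by
      gcongr
      · exact (isGreatest_matrixFractionalMinorant hp).2 ⟨Y, rfl⟩
      · exact (isGreatest_matrixFractionalMinorant hq).2 ⟨Y, rfl⟩

end Matrix

/-- The matrix fractional function `f(X, Z) = Tr(Xᴴ Z⁻¹ X)` is jointly convex in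
`(X, Z)` with `Z` Hermitian positive definite. -/
theorem stmt_1 {M N : ℕ} (X₁ X₂ : Matrix (Fin M) (Fin N) ℂ)
    (Z₁ Z₂ : Matrix (Fin M) (Fin M) ℂ) (hZ₁ : Z₁.PosDef) (hZ₂ : Z₂.PosDef)
    (t : ℝ) (ht0 : 0 ≤ t) (ht1 : t ≤ 1) :
    (Matrix.trace ((t • X₁ + (1 - t) • X₂)ᴴ * (t • Z₁ + (1 - t) • Z₂)⁻¹ *
        (t • X₁ + (1 - t) • X₂))).re ≤
      t * (Matrix.trace (X₁ᴴ * Z₁⁻¹ * X₁)).re +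
        (1 - t) * (Matrix.trace (X₂ᴴ * Z₂⁻¹ * X₂)).re := by
  simpa [matrixFractional] using
    convexOn_matrixFractional.2 (x := (X₁, Z₁)) (y := (X₂, Z₂)) hZ₁ hZ₂ ht0 (sub_nonneg.2 ht1)
      (add_sub_cancel t 1)
end

section
/- Let M be a Hermitian positive semidefinite n×n matrix. For any pairs (X₁, Z₁) and (X₂, Z₂) with Z₁, Z₂ Hermitian positive definite m×m matrices and X₁, X₂ ∈ ℂ^{m×n}, and t ∈ [0,1], the matrix-valued map h(Z, X) = M − M Xᴴ Z⁻¹ X M is matrix concave: h(tZ₁+(1-t)Z₂, tX₁+(1-t)X₂) ⪰ t·h(Z₁,X₁) + (1-t)·h(Z₂,X₂) in the Loewner order. -/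
/-!
Since `M` is Hermitian, `h(Z, X) = M - Yᴴ Z⁻¹ Y` with `Y = X M`, which is affine in `X`; so the
claim is the joint convexity of `(Y, Z) ↦ Yᴴ Z⁻¹ Y`. By the Schur complement criterion,
`W ⪰ Yᴴ Z⁻¹ Y` iff the block matrix `[[Z, Y], [Yᴴ, W]]` is positive semidefinite, and a convex
combination of the block matrices with `W = Yᵢᴴ Zᵢ⁻¹ Yᵢ` is again positive semidefinite.
-/

open Matrix
open scoped ComplexOrder

namespace Matrix

variable {𝕜 m n : Type*} [RCLike 𝕜]

theorem PosDef.smul_add_one_sub_smul {Z₁ Z₂ : Matrix m m 𝕜} (hZ₁ : Z₁.PosDef)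
    (hZ₂ : Z₂.PosDef) {t : ℝ} (ht0 : 0 ≤ t) (ht1 : t ≤ 1) : (t • Z₁ + (1 - t) • Z₂).PosDef := by
  rcases ht1.lt_or_eq with ht1 | rfl
  · exact .posSemidef_add (hZ₁.posSemidef.smul ht0) (hZ₂.smul (sub_pos.2 ht1))
  · simpa using hZ₁

variable [Fintype m] [Fintype n] [DecidableEq m]

theorem PosDef.posSemidef_fromBlocks_conjTranspose_mul_inv_mul {Z : Matrix m m 𝕜}
    (hZ : Z.PosDef) (Y : Matrix m n 𝕜) : (fromBlocks Z Y Yᴴ (Yᴴ * Z⁻¹ * Y)).PosSemidef := by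
  have := hZ.isUnit.invertible
  rw [PosDef.fromBlocks₁₁ _ _ hZ, sub_self]
  exact .zero

theorem PosDef.posSemidef_convexComb_sub_conjTranspose_mul_inv_mul {Z₁ Z₂ : Matrix m m 𝕜}
    (hZ₁ : Z₁.PosDef) (hZ₂ : Z₂.PosDef) (Y₁ Y₂ : Matrix m n 𝕜) {t : ℝ} (ht0 : 0 ≤ t)
    (ht1 : t ≤ 1) :
    (t • (Y₁ᴴ * Z₁⁻¹ * Y₁) + (1 - t) • (Y₂ᴴ * Z₂⁻¹ * Y₂) -
      (t • Y₁ + (1 - t) • Y₂)ᴴ * (t • Z₁ + (1 - t) • Z₂)⁻¹ *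
        (t • Y₁ + (1 - t) • Y₂)).PosSemidef := by
  have hZ := hZ₁.smul_add_one_sub_smul hZ₂ ht0 ht1
  have := hZ.isUnit.invertible
  have hblocks : fromBlocks (t • Z₁ + (1 - t) • Z₂) (t • Y₁ + (1 - t) • Y₂)
      (t • Y₁ + (1 - t) • Y₂)ᴴ (t • (Y₁ᴴ * Z₁⁻¹ * Y₁) + (1 - t) • (Y₂ᴴ * Z₂⁻¹ * Y₂)) =
      t • fromBlocks Z₁ Y₁ Y₁ᴴ (Y₁ᴴ * Z₁⁻¹ * Y₁) +
        (1 - t) • fromBlocks Z₂ Y₂ Y₂ᴴ (Y₂ᴴ * Z₂⁻¹ * Y₂) := by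
    simp only [fromBlocks_smul, fromBlocks_add, conjTranspose_add, conjTranspose_smul,
      star_trivial]
  rw [← PosDef.fromBlocks₁₁ _ _ hZ, hblocks]
  exact ((hZ₁.posSemidef_fromBlocks_conjTranspose_mul_inv_mul Y₁).smul ht0).add
    ((hZ₂.posSemidef_fromBlocks_conjTranspose_mul_inv_mul Y₂).smul (sub_nonneg.2 ht1))

end Matrix

/-- For Hermitian PSD `M`, the map `h(Z, X) = M − M Xᴴ Z⁻¹ X M` is jointly matrix
concave in `(Z, X)` with `Z` Hermitian positive definite, in the Loewner order. -/
theorem stmt_2 {m n : ℕ} (M : Matrix (Fin n) (Fin n) ℂ) (hM : M.PosSemidef)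
    (X₁ X₂ : Matrix (Fin m) (Fin n) ℂ) (Z₁ Z₂ : Matrix (Fin m) (Fin m) ℂ)
    (hZ₁ : Z₁.PosDef) (hZ₂ : Z₂.PosDef) (t : ℝ) (ht0 : 0 ≤ t) (ht1 : t ≤ 1) :
    ((M - M * (t • X₁ + (1 - t) • X₂)ᴴ * (t • Z₁ + (1 - t) • Z₂)⁻¹ *
          (t • X₁ + (1 - t) • X₂) * M) -
        (t • (M - M * X₁ᴴ * Z₁⁻¹ * X₁ * M) +
          (1 - t) • (M - M * X₂ᴴ * Z₂⁻¹ * X₂ * M))).PosSemidef := by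
  have hdiff : M - M * (t • X₁ + (1 - t) • X₂)ᴴ * (t • Z₁ + (1 - t) • Z₂)⁻¹ *
        (t • X₁ + (1 - t) • X₂) * M -
      (t • (M - M * X₁ᴴ * Z₁⁻¹ * X₁ * M) + (1 - t) • (M - M * X₂ᴴ * Z₂⁻¹ * X₂ * M)) =
      t • ((X₁ * M)ᴴ * Z₁⁻¹ * (X₁ * M)) + (1 - t) • ((X₂ * M)ᴴ * Z₂⁻¹ * (X₂ * M)) -
        (t • (X₁ * M) + (1 - t) • (X₂ * M))ᴴ * (t • Z₁ + (1 - t) • Z₂)⁻¹ *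
          (t • (X₁ * M) + (1 - t) • (X₂ * M)) := by
    simp only [conjTranspose_mul, conjTranspose_add, conjTranspose_smul, star_trivial, hM.1.eq,
      Matrix.add_mul, Matrix.mul_add, Matrix.smul_mul, Matrix.mul_smul, Matrix.mul_assoc]
    module
  rw [hdiff]
  exact hZ₁.posSemidef_convexComb_sub_conjTranspose_mul_inv_mul hZ₂ (X₁ * M) (X₂ * M) ht0 ht1
end

section
/- Let M ∈ ℂ^{n×n} and Z ∈ ℂ^{m×m} be Hermitian matrices, and let λ be a real constant with λI ⪰ Mᵀ ⊗ Z. Then for any X, X⁽ᵗ⁾ ∈ ℂ^{m×n}: Tr(Z X M Xᴴ) ≤ −2Re Tr(λ Xᴴ X⁽ᵗ⁾ − Z X⁽ᵗ⁾ M Xᴴ) + λ‖X‖_F² + vec(X⁽ᵗ⁾)ᴴ(λI − Mᵀ⊗Z)vec(X⁽ᵗ⁾). -/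
open Matrix
open scoped ComplexOrder Kronecker

/-- `vec` stacks the columns of a matrix, indexed so that it matches the Kronecker
product `Mᵀ ⊗ Z` on index type `n × m`: `vec X (j, i) = X i j`. -/
def matVec {m n : ℕ} (X : Matrix (Fin m) (Fin n) ℂ) : Fin n × Fin m → ℂ :=
  fun p => X p.2 p.1

lemma kron_quad {m n : ℕ} (M : Matrix (Fin n) (Fin n) ℂ) (Z : Matrix (Fin m) (Fin m) ℂ)
    (X Y : Matrix (Fin m) (Fin n) ℂ) :
    star (matVec Y) ⬝ᵥ ((Mᵀ ⊗ₖ Z) *ᵥ matVec X) = Matrix.trace (Z * X * M * Yᴴ) := by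
  simp only [dotProduct, mulVec, Matrix.trace, diag_apply, mul_apply, matVec,
    kroneckerMap_apply, Fintype.sum_prod_type, Finset.mul_sum, Finset.sum_mul,
    conjTranspose_apply, Pi.star_apply, transpose_apply]
  rw [Finset.sum_comm]
  refine Finset.sum_congr rfl fun i _ => ?_
  exact Finset.sum_congr rfl fun j _ => Finset.sum_congr rfl fun l _ =>
    Finset.sum_congr rfl fun k _ => by ring

lemma vec_dot {m n : ℕ} (X Y : Matrix (Fin m) (Fin n) ℂ) :
    star (matVec Y) ⬝ᵥ matVec X = Matrix.trace (Yᴴ * X) := by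
  simp only [dotProduct, Matrix.trace, diag_apply, mul_apply, matVec, Fintype.sum_prod_type,
    conjTranspose_apply, Pi.star_apply]

lemma vec_norm {m n : ℕ} (X : Matrix (Fin m) (Fin n) ℂ) :
    (star (matVec X) ⬝ᵥ matVec X).re = ∑ i, ∑ j, ‖X i j‖ ^ 2 := by
  simp only [dotProduct, matVec, Fintype.sum_prod_type, Pi.star_apply, Complex.re_sum]
  rw [Finset.sum_comm]
  refine Finset.sum_congr rfl fun i _ => Finset.sum_congr rfl fun j _ => ?_
  rw [Complex.star_def, mul_comm, Complex.mul_conj]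
  simp [Complex.normSq_eq_norm_sq, sq]

lemma herm_swap {k : Type*} [Fintype k] {A : Matrix k k ℂ} (hA : A.IsHermitian)
    (x y : k → ℂ) :
    star x ⬝ᵥ (A *ᵥ y) = star (star y ⬝ᵥ (A *ᵥ x)) := by
  rw [star_dotProduct]
  congr 1
  rw [star_mulVec, hA.eq, ← dotProduct_mulVec]

lemma trace_swap {m n : ℕ} {M : Matrix (Fin n) (Fin n) ℂ} {Z : Matrix (Fin m) (Fin m) ℂ}
    (hM : M.IsHermitian) (hZ : Z.IsHermitian) (X Y : Matrix (Fin m) (Fin n) ℂ) :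
    Matrix.trace (Z * X * M * Yᴴ) = star (Matrix.trace (Z * Y * M * Xᴴ)) := by
  rw [← Matrix.trace_conjTranspose]
  rw [show (Z * Y * M * Xᴴ)ᴴ = X * (Mᴴ * (Yᴴ * Zᴴ)) by
    simp [conjTranspose_mul, Matrix.mul_assoc]]
  rw [hM.eq, hZ.eq, Matrix.trace_mul_comm]
  rw [Matrix.trace_mul_comm Yᴴ]
  simp only [Matrix.mul_assoc]
  rw [Matrix.trace_mul_comm Z]
  simp only [Matrix.mul_assoc]

/-- Majorization of the quadratic form `Tr(Z X M Xᴴ)`: for Hermitian `M`, `Z` and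
`λ` with `λI ⪰ Mᵀ ⊗ Z`, and any `X`, `Xt`,
`Tr(Z X M Xᴴ) ≤ −2 Re Tr(λ Xᴴ Xt − Z Xt M Xᴴ) + λ‖X‖²_F + vec(Xt)ᴴ(λI − Mᵀ⊗Z)vec(Xt)`. -/
theorem stmt_3 {m n : ℕ} (M : Matrix (Fin n) (Fin n) ℂ) (Z : Matrix (Fin m) (Fin m) ℂ)
    (hM : M.IsHermitian) (hZ : Z.IsHermitian) (lam : ℝ)
    (hlam : ((lam : ℂ) • (1 : Matrix (Fin n × Fin m) (Fin n × Fin m) ℂ) -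
        Mᵀ ⊗ₖ Z).PosSemidef)
    (X Xt : Matrix (Fin m) (Fin n) ℂ) :
    (Matrix.trace (Z * X * M * Xᴴ)).re ≤
      -2 * ((lam : ℂ) * Matrix.trace (Xᴴ * Xt) - Matrix.trace (Z * Xt * M * Xᴴ)).re +
        lam * (∑ i, ∑ j, ‖X i j‖ ^ 2) +
        (dotProduct (star (matVec Xt))
          ((((lam : ℂ) • (1 : Matrix (Fin n × Fin m) (Fin n × Fin m) ℂ) -
              Mᵀ ⊗ₖ Z) *ᵥ matVec Xt))).re := by
  set K := Mᵀ ⊗ₖ Z with hKdef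
  set A := (lam : ℂ) • (1 : Matrix (Fin n × Fin m) (Fin n × Fin m) ℂ) - K with hAdef
  set v := matVec X with hv
  set w := matVec Xt with hw
  have hlin : ∀ u y : Fin n × Fin m → ℂ, star u ⬝ᵥ (A *ᵥ y)
      = (lam : ℂ) * (star u ⬝ᵥ y) - star u ⬝ᵥ (K *ᵥ y) := by
    intro u y
    simp [hAdef, sub_mulVec, smul_mulVec, one_mulVec, dotProduct_sub,
      dotProduct_smul, smul_eq_mul]
  have h0 : 0 ≤ star (v - w) ⬝ᵥ (A *ᵥ (v - w)) := hlam.dotProduct_mulVec_nonneg _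
  have h0re : (0 : ℝ) ≤ (star (v - w) ⬝ᵥ (A *ᵥ (v - w))).re := by
    have := (Complex.le_def.mp h0).1; simpa using this
  have hexp : star (v - w) ⬝ᵥ (A *ᵥ (v - w))
      = star v ⬝ᵥ (A *ᵥ v) - star v ⬝ᵥ (A *ᵥ w) - star w ⬝ᵥ (A *ᵥ v)
        + star w ⬝ᵥ (A *ᵥ w) := by
    simp only [star_sub, sub_dotProduct, mulVec_sub, dotProduct_sub]
    ring
  have hsw : star v ⬝ᵥ (A *ᵥ w) = star (star w ⬝ᵥ (A *ᵥ v)) := herm_swap hlam.1 v w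
  have hvv : (star v ⬝ᵥ (A *ᵥ v)).re
      = lam * (∑ i, ∑ j, ‖X i j‖ ^ 2) - (Matrix.trace (Z * X * M * Xᴴ)).re := by
    rw [hlin v v, hv, hKdef, kron_quad]
    simp [Complex.sub_re, Complex.mul_re, vec_norm]
  have hwv : (star w ⬝ᵥ (A *ᵥ v)).re
      = ((lam : ℂ) * Matrix.trace (Xᴴ * Xt) - Matrix.trace (Z * Xt * M * Xᴴ)).re := by
    have h1 : Matrix.trace (Xtᴴ * X) = star (Matrix.trace (Xᴴ * Xt)) := by
      rw [← Matrix.trace_conjTranspose]; simp [conjTranspose_mul]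
    have h2 : Matrix.trace (Z * X * M * Xtᴴ) = star (Matrix.trace (Z * Xt * M * Xᴴ)) :=
      trace_swap hM hZ X Xt
    rw [hlin w v, hv, hw, hKdef, kron_quad, vec_dot, h1, h2]
    simp [Complex.sub_re, Complex.mul_re, Complex.star_def, Complex.conj_re]
  rw [hexp, hsw] at h0re
  simp only [Complex.add_re, Complex.sub_re, Complex.star_def, Complex.conj_re] at h0re
  rw [hvv, hwv] at h0re
  linarith
end
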